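/- arXiv:math-ph/9910022 — 2 statements merged into one kernel-verified Lean document; each statement's English description precedes it below -/
import Mathlib

section
/- Let (T, dist) be a countable metric space, Λ ⊆ T a finite subset, and g : T → ℝ a bounded nonnegative function. Suppose there is a constant 0 < b < 1 and a kernel p : T × T → ℝ with p ≥ 0, sup_x Σ_u p(x,u) ≤ 1, sup_u Σ_x p(x,u) ≤ 1, such that g(x) ≤ b Σ_u p(x,u) g(u) for all x ∈ T \ Λ. Assume the kernel is tempered: for some m > 0, sup_x Σ_u e^{m·dist(x,u)} p(x,u) < ∞ and sup_u Σ_x e^{m·dist(x,u)} p(x,u) < ∞. Then there exists μ > 0 such that Σ_y e^{μ·dist(y,Λ)} g(y) < ∞, where dist(y,Λ) = inf_{x∈Λ} dist(y,x). -/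
open scoped BigOperators ENNReal
open Filter

set_option linter.unusedSectionVars false

section SubharmCore

variable {T : Type*} [DecidableEq T]

/-- Iterated kernel: paths whose first `n` points avoid the killed rows of `Pt`. -/
noncomputable def kiter (Pt : T → T → ℝ≥0∞) : ℕ → T → T → ℝ≥0∞
  | 0 => fun x u => if x = u then 1 else 0
  | (n+1) => fun x u => ∑' v, kiter Pt n x v * Pt v u

lemma tsum_split_pred (f : T → ℝ≥0∞) (Q : T → Prop) [DecidablePred Q] :
    ∑' y, f y = (∑' y, if Q y then f y else 0) + ∑' y, (if Q y then 0 else f y) := by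
  rw [← ENNReal.tsum_add]
  exact tsum_congr fun y => by split_ifs <;> simp

lemma kiter_row (Pt : T → T → ℝ≥0∞) (hPt : ∀ v, ∑' u, Pt v u ≤ 1) :
    ∀ n x, ∑' u, kiter Pt n x u ≤ 1 := by
  intro n
  induction n with
  | zero =>
    intro x
    have : ∑' u, kiter Pt 0 x u = 1 := by
      rw [show (fun u => kiter Pt 0 x u) = fun u => if u = x then 1 else 0 from
        funext fun u => by simp [kiter, eq_comm]]
      exact tsum_ite_eq x 1
    exact this.le
  | succ n ih =>
    intro x
    calc ∑' u, kiter Pt (n+1) x u = ∑' u, ∑' v, kiter Pt n x v * Pt v u := rfl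
    _ = ∑' v, ∑' u, kiter Pt n x v * Pt v u := ENNReal.tsum_comm
    _ = ∑' v, kiter Pt n x v * ∑' u, Pt v u := tsum_congr fun v => ENNReal.tsum_mul_left
    _ ≤ ∑' v, kiter Pt n x v * 1 :=
        ENNReal.tsum_le_tsum fun v => mul_le_mul_right (hPt v) _
    _ = ∑' v, kiter Pt n x v := by simp
    _ ≤ 1 := ih x

lemma kiter_col (Pt P : T → T → ℝ≥0∞) (hle : ∀ v u, Pt v u ≤ P v u)
    (W : T → T → ℝ≥0∞) (htri : ∀ y v u, W y u ≤ W y v * W v u) (hWuu : ∀ u, W u u = 1)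
    (s : ℝ≥0∞) (hcol : ∀ u, ∑' x, W x u * P x u ≤ s) :
    ∀ k u, ∑' y, W y u * kiter Pt k y u ≤ s ^ k := by
  intro k
  induction k with
  | zero =>
    intro u
    have : ∑' y, W y u * kiter Pt 0 y u = 1 := by
      rw [tsum_eq_single u (fun y hy => by simp [kiter, hy])]
      simp [kiter, hWuu]
    simpa using this.le
  | succ k ih =>
    intro u
    calc ∑' y, W y u * kiter Pt (k+1) y u
        = ∑' y, ∑' v, W y u * (kiter Pt k y v * Pt v u) := by
          exact tsum_congr fun y => by
            rw [show kiter Pt (k+1) y u = ∑' v, kiter Pt k y v * Pt v u from rfl,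
              ENNReal.tsum_mul_left]
    _ ≤ ∑' y, ∑' v, (W y v * W v u) * (kiter Pt k y v * Pt v u) :=
        ENNReal.tsum_le_tsum fun y => ENNReal.tsum_le_tsum fun v =>
          mul_le_mul_left (htri y v u) _
    _ = ∑' v, ∑' y, (W y v * kiter Pt k y v) * (W v u * Pt v u) := by
        rw [ENNReal.tsum_comm]
        exact tsum_congr fun v => tsum_congr fun y => by ring
    _ = ∑' v, (∑' y, W y v * kiter Pt k y v) * (W v u * Pt v u) :=
        tsum_congr fun v => ENNReal.tsum_mul_right
    _ ≤ ∑' v, s ^ k * (W v u * P v u) :=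
        ENNReal.tsum_le_tsum fun v =>
          mul_le_mul' (ih v) (mul_le_mul_right (hle v u) _)
    _ = s ^ k * ∑' v, W v u * P v u := ENNReal.tsum_mul_left
    _ ≤ s ^ k * s := mul_le_mul_right (hcol u) _
    _ = s ^ (k+1) := (pow_succ s k).symm

/-- `x ≤ partial sums + B^n * M` for all `n` implies `x ≤ tsum`. -/
lemma le_tsum_of_partial (a : ℕ → ℝ≥0∞) (B M x : ℝ≥0∞) (hB : B < 1) (hM : M ≠ ⊤)
    (h : ∀ n, x ≤ (∑ k ∈ Finset.range n, a k) + B ^ n * M) : x ≤ ∑' k, a k := by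
  have h1 : Tendsto (fun n : ℕ => B ^ n * M) atTop (nhds 0) := by
    have := ENNReal.Tendsto.mul_const
      (ENNReal.tendsto_pow_atTop_nhds_zero_of_lt_one hB) (Or.inr hM)
    simpa using this
  have h2 : Tendsto (fun n : ℕ => (∑ k ∈ Finset.range n, a k) + B ^ n * M) atTop
      (nhds (∑' k, a k)) := by
    have := (ENNReal.tendsto_nat_tsum a).add h1
    simpa using this
  exact ge_of_tendsto' h2 h

/-- the kernel with rows in `Λ` killed -/
noncomputable def ptil (Λ : Finset T) (P : T → T → ℝ≥0∞) : T → T → ℝ≥0∞ :=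
  fun v u => if v ∈ Λ then 0 else P v u

lemma ptil_le (Λ : Finset T) (P : T → T → ℝ≥0∞) (v u : T) : ptil Λ P v u ≤ P v u := by
  unfold ptil; split_ifs <;> simp

/-- The iterated sub-mean inequality. -/
lemma subharm_iter (Λ : Finset T) (G : T → ℝ≥0∞) (B : ℝ≥0∞) (P : T → T → ℝ≥0∞)
    (hsub : ∀ x, x ∉ Λ → G x ≤ B * ∑' u, P x u * G u) :
    ∀ n, ∀ x, x ∉ Λ → G x ≤
      (∑ k ∈ Finset.range n, B ^ (k+1) *
        ∑' u, if u ∈ Λ then kiter (ptil Λ P) (k+1) x u * G u else 0) +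
      B ^ n * ∑' u, (if u ∈ Λ then 0 else kiter (ptil Λ P) n x u * G u) := by
  set Pt := ptil Λ P with hPt
  intro n
  induction n with
  | zero =>
    intro x hx
    have : ∑' u, (if u ∈ Λ then 0 else kiter Pt 0 x u * G u) = G x := by
      rw [tsum_eq_single x (fun u hu => by simp [kiter, Ne.symm hu])]
      simp [kiter, hx]
    simp [this]
  | succ n ih =>
    intro x hx
    have key : ∑' u, (if u ∈ Λ then 0 else kiter Pt n x u * G u) ≤
        B * ((∑' u, if u ∈ Λ then kiter Pt (n+1) x u * G u else 0) +
             ∑' u, (if u ∈ Λ then 0 else kiter Pt (n+1) x u * G u)) := by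
      have hsplit : (∑' u, if u ∈ Λ then kiter Pt (n+1) x u * G u else 0) +
          (∑' u, (if u ∈ Λ then 0 else kiter Pt (n+1) x u * G u)) =
          ∑' u, kiter Pt (n+1) x u * G u :=
        (tsum_split_pred (fun u => kiter Pt (n+1) x u * G u) (· ∈ Λ)).symm
      rw [hsplit]
      have hswap : B * ∑' u, kiter Pt (n+1) x u * G u =
          ∑' v, kiter Pt n x v * (B * ∑' u, Pt v u * G u) := by
        calc B * ∑' u, kiter Pt (n+1) x u * G u
            = B * ∑' u, ∑' v, (kiter Pt n x v * Pt v u) * G u := by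
              refine congrArg (B * ·) (tsum_congr fun u => ?_)
              rw [show kiter Pt (n+1) x u = ∑' v, kiter Pt n x v * Pt v u from rfl,
                ENNReal.tsum_mul_right]
        _ = B * ∑' v, ∑' u, (kiter Pt n x v * Pt v u) * G u := by rw [ENNReal.tsum_comm]
        _ = ∑' v, B * ∑' u, kiter Pt n x v * (Pt v u * G u) := by
              rw [← ENNReal.tsum_mul_left]
              exact tsum_congr fun v => congrArg (B * ·) (tsum_congr fun u => by ring)
        _ = ∑' v, kiter Pt n x v * (B * ∑' u, Pt v u * G u) := by
              exact tsum_congr fun v => by rw [ENNReal.tsum_mul_left]; ring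
      rw [hswap]
      refine ENNReal.tsum_le_tsum fun v => ?_
      by_cases hv : v ∈ Λ
      · simp [hv]
      · simp only [hv, if_false]
        refine mul_le_mul_right ?_ _
        have : (fun u => Pt v u * G u) = fun u => P v u * G u := by
          funext u; simp [hPt, ptil, hv]
        rw [this]
        exact hsub v hv
    calc G x ≤ (∑ k ∈ Finset.range n, B ^ (k+1) *
          ∑' u, if u ∈ Λ then kiter Pt (k+1) x u * G u else 0) +
          B ^ n * ∑' u, (if u ∈ Λ then 0 else kiter Pt n x u * G u) := ih x hx
    _ ≤ (∑ k ∈ Finset.range n, B ^ (k+1) *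
          ∑' u, if u ∈ Λ then kiter Pt (k+1) x u * G u else 0) +
          B ^ n * (B * ((∑' u, if u ∈ Λ then kiter Pt (n+1) x u * G u else 0) +
             ∑' u, (if u ∈ Λ then 0 else kiter Pt (n+1) x u * G u))) :=
        add_le_add_right (mul_le_mul_right key _) _
    _ = (∑ k ∈ Finset.range (n+1), B ^ (k+1) *
          ∑' u, if u ∈ Λ then kiter Pt (k+1) x u * G u else 0) +
          B ^ (n+1) * ∑' u, (if u ∈ Λ then 0 else kiter Pt (n+1) x u * G u) := by
        rw [Finset.sum_range_succ]; ring

/-- Core of the subharmonicity principle, in `ℝ≥0∞`. -/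
lemma subharm_core (Λ : Finset T) (G : T → ℝ≥0∞) (M : ℝ≥0∞) (hM : M ≠ ⊤)
    (hGM : ∀ x, G x ≤ M)
    (B : ℝ≥0∞) (hB : B < 1) (P : T → T → ℝ≥0∞)
    (hrow : ∀ x, ∑' u, P x u ≤ 1)
    (hsub : ∀ x, x ∉ Λ → G x ≤ B * ∑' u, P x u * G u)
    (W : T → T → ℝ≥0∞) (hWuu : ∀ u, W u u = 1)
    (htri : ∀ y v u, W y u ≤ W y v * W v u)
    (s : ℝ≥0∞) (hcol : ∀ u, ∑' x, W x u * P x u ≤ s)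
    (hBs : B * s < 1)
    (Wd : T → ℝ≥0∞) (hWd : ∀ y, ∀ u ∈ Λ, Wd y ≤ W y u) :
    ∑' y, Wd y * G y < ⊤ := by
  set Pt := ptil Λ P with hPtdef
  have hPtrow : ∀ v, ∑' u, Pt v u ≤ 1 :=
    fun v => le_trans (ENNReal.tsum_le_tsum fun u => ptil_le Λ P v u) (hrow v)
  have hKrow := kiter_row Pt hPtrow
  have hKcol := kiter_col Pt P (ptil_le Λ P) W htri hWuu s hcol
  set S : ℕ → T → ℝ≥0∞ := fun k x => ∑' u, if u ∈ Λ then kiter Pt k x u * G u else 0 with hSdef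
  have hlim : ∀ x, x ∉ Λ → G x ≤ ∑' k, B ^ (k+1) * S (k+1) x := by
    intro x hx
    refine le_tsum_of_partial _ B M _ hB hM fun n => ?_
    refine le_trans (subharm_iter Λ G B P hsub n x hx) (add_le_add_right ?_ _)
    refine mul_le_mul_right ?_ _
    calc ∑' u, (if u ∈ Λ then 0 else kiter Pt n x u * G u)
        ≤ ∑' u, kiter Pt n x u * M := by
          refine ENNReal.tsum_le_tsum fun u => ?_
          split_ifs
          · exact zero_le
          · exact mul_le_mul_right (hGM u) _
    _ = (∑' u, kiter Pt n x u) * M := ENNReal.tsum_mul_right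
    _ ≤ 1 * M := mul_le_mul_left (hKrow n x) M
    _ = M := one_mul M
  have hSk : ∀ k, ∑' y, Wd y * S k y ≤ (∑ u ∈ Λ, G u) * s ^ k := by
    intro k
    calc ∑' y, Wd y * S k y
        = ∑' y, ∑' u, (if u ∈ Λ then (Wd y * kiter Pt k y u) * G u else 0) := by
          refine tsum_congr fun y => ?_
          rw [hSdef]
          simp only
          rw [← ENNReal.tsum_mul_left]
          refine tsum_congr fun u => ?_
          split_ifs
          · ring
          · simp
    _ = ∑' u, ∑' y, (if u ∈ Λ then (Wd y * kiter Pt k y u) * G u else 0) := ENNReal.tsum_comm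
    _ = ∑' u, (if u ∈ Λ then (∑' y, Wd y * kiter Pt k y u) * G u else 0) := by
          refine tsum_congr fun u => ?_
          split_ifs
          · exact ENNReal.tsum_mul_right
          · simp
    _ ≤ ∑' u, (if u ∈ Λ then s ^ k * G u else 0) := by
          refine ENNReal.tsum_le_tsum fun u => ?_
          split_ifs with hu
          · refine mul_le_mul_left ?_ _
            refine le_trans
              (ENNReal.tsum_le_tsum fun y => mul_le_mul_left (hWd y u hu) _) ?_
            exact hKcol k u
          · exact le_refl 0
    _ = ∑ u ∈ Λ, (if u ∈ Λ then s ^ k * G u else 0) := tsum_eq_sum (fun u hu => if_neg hu)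
    _ = ∑ u ∈ Λ, s ^ k * G u := Finset.sum_congr rfl fun u hu => if_pos hu
    _ = (∑ u ∈ Λ, G u) * s ^ k := by rw [← Finset.mul_sum, mul_comm]
  have hΛG : (∑ u ∈ Λ, G u) < ⊤ :=
    ENNReal.sum_lt_top.mpr fun u _ => lt_of_le_of_lt (hGM u) (lt_top_iff_ne_top.mpr hM)
  rw [tsum_split_pred (fun y => Wd y * G y) (· ∈ Λ)]
  have part1 : (∑' y, if y ∈ Λ then Wd y * G y else 0) < ⊤ := by
    rw [tsum_eq_sum (s := Λ) (fun y hy => if_neg hy)]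
    refine ENNReal.sum_lt_top.mpr fun y hy => ?_
    rw [if_pos hy]
    have hle : Wd y * G y ≤ M := by
      calc Wd y * G y ≤ W y y * M := mul_le_mul' (hWd y y hy) (hGM y)
      _ = M := by rw [hWuu, one_mul]
    exact lt_of_le_of_lt hle (lt_top_iff_ne_top.mpr hM)
  have part2 : (∑' y, (if y ∈ Λ then 0 else Wd y * G y)) < ⊤ := by
    have step1 : (∑' y, (if y ∈ Λ then 0 else Wd y * G y)) ≤
        ∑' k, B ^ (k+1) * ∑' y, Wd y * S (k+1) y := by
      calc ∑' y, (if y ∈ Λ then 0 else Wd y * G y)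
          ≤ ∑' y, ∑' k, B ^ (k+1) * (Wd y * S (k+1) y) := by
            refine ENNReal.tsum_le_tsum fun y => ?_
            split_ifs with hy
            · exact zero_le
            · calc Wd y * G y ≤ Wd y * ∑' k, B ^ (k+1) * S (k+1) y :=
                    mul_le_mul_right (hlim y hy) _
              _ = ∑' k, B ^ (k+1) * (Wd y * S (k+1) y) := by
                  rw [← ENNReal.tsum_mul_left]
                  exact tsum_congr fun k => by ring
      _ = ∑' k, ∑' y, B ^ (k+1) * (Wd y * S (k+1) y) := ENNReal.tsum_comm
      _ = ∑' k, B ^ (k+1) * ∑' y, Wd y * S (k+1) y :=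
            tsum_congr fun k => ENNReal.tsum_mul_left
    have step2 : (∑' k, B ^ (k+1) * ∑' y, Wd y * S (k+1) y) ≤
        (∑ u ∈ Λ, G u) * ∑' k : ℕ, (B * s) ^ (k+1) := by
      rw [← ENNReal.tsum_mul_left]
      refine ENNReal.tsum_le_tsum fun k => ?_
      calc B ^ (k+1) * ∑' y, Wd y * S (k+1) y
          ≤ B ^ (k+1) * ((∑ u ∈ Λ, G u) * s ^ (k+1)) := mul_le_mul_right (hSk (k+1)) _
      _ = (∑ u ∈ Λ, G u) * (B * s) ^ (k+1) := by rw [mul_pow]; ring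
    have geo : (∑' k : ℕ, (B * s) ^ (k+1)) < ⊤ := by
      have h1 : (∑' k : ℕ, (B * s) ^ (k+1)) ≤ ∑' k : ℕ, (B * s) ^ k :=
        ENNReal.tsum_le_tsum fun k =>
          pow_le_pow_of_le_one zero_le hBs.le (Nat.le_succ k)
      refine lt_of_le_of_lt h1 ?_
      rw [ENNReal.tsum_geometric]
      exact ENNReal.inv_lt_top.mpr (tsub_pos_of_lt hBs)
    exact lt_of_le_of_lt (le_trans step1 step2) (ENNReal.mul_lt_top hΛG geo)
  exact ENNReal.add_lt_top.mpr ⟨part1, part2⟩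

end SubharmCore

/-- Subharmonicity principle (Prop. 3.3): a bounded nonnegative function which is
strictly sub-mean with respect to a tempered sub-probability kernel outside a finite
set `Λ` is exponentially summable. -/
theorem subharmonicity_principle
    {T : Type*} [Countable T] [MetricSpace T]
    (Λ : Finset T) (hΛ : Λ.Nonempty)
    (g : T → ℝ) (hg0 : ∀ x, 0 ≤ g x) (hgbdd : ∃ M, ∀ x, g x ≤ M)
    (b : ℝ) (hb0 : 0 < b) (hb1 : b < 1)
    (p : T → T → ℝ) (hp0 : ∀ x u, 0 ≤ p x u)
    (hrow : ∀ x, Summable (fun u => p x u) ∧ ∑' u, p x u ≤ 1)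
    (hcol : ∀ u, Summable (fun x => p x u) ∧ ∑' x, p x u ≤ 1)
    (hsub : ∀ x, x ∉ Λ → g x ≤ b * ∑' u, p x u * g u)
    (m : ℝ) (hm : 0 < m) (C : ℝ)
    (htemp_row : ∀ x, Summable (fun u => Real.exp (m * dist x u) * p x u) ∧
      ∑' u, Real.exp (m * dist x u) * p x u ≤ C)
    (htemp_col : ∀ u, Summable (fun x => Real.exp (m * dist x u) * p x u) ∧
      ∑' x, Real.exp (m * dist x u) * p x u ≤ C) :
    ∃ μ : ℝ, 0 < μ ∧
      Summable (fun y => Real.exp (μ * Metric.infDist y (Λ : Set T)) * g y) := by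
  classical
  obtain ⟨M, hM⟩ := hgbdd
  obtain ⟨x₀, hx₀⟩ := hΛ
  have hM0 : 0 ≤ M := le_trans (hg0 x₀) (hM x₀)
  have hC0 : 0 ≤ C := by
    have h := (htemp_col x₀).2
    have h2 : 0 ≤ ∑' x, Real.exp (m * dist x x₀) * p x x₀ :=
      tsum_nonneg fun x => mul_nonneg (Real.exp_pos _).le (hp0 x x₀)
    linarith
  set ε : ℝ := (1 - b) / (4 * b) with hεdef
  have hε0 : 0 < ε := div_pos (by linarith) (by linarith)
  set R : ℝ := max 1 ((2/m) * Real.log (C/ε + 1)) with hRdef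
  have hR1 : (1:ℝ) ≤ R := le_max_left _ _
  have hR0 : (0:ℝ) < R := lt_of_lt_of_le one_pos hR1
  have hRC : Real.exp (-(m/2) * R) * C ≤ ε := by
    have hx1 : (0:ℝ) < C/ε + 1 := by positivity
    have hlog : Real.log (C/ε + 1) ≤ (m/2) * R := by
      have h1 : (2/m) * Real.log (C/ε + 1) ≤ R := le_max_right _ _
      have h2 := mul_le_mul_of_nonneg_left h1 (by positivity : (0:ℝ) ≤ m/2)
      calc Real.log (C/ε + 1) = (m/2) * ((2/m) * Real.log (C/ε + 1)) := by
            field_simp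
      _ ≤ (m/2) * R := h2
    have hexp : C/ε + 1 ≤ Real.exp ((m/2) * R) := by
      calc C/ε + 1 = Real.exp (Real.log (C/ε + 1)) := (Real.exp_log hx1).symm
      _ ≤ Real.exp ((m/2) * R) := Real.exp_le_exp.mpr hlog
    have heq : ε * (C/ε + 1) = C + ε := by field_simp
    have h3 : C + ε ≤ ε * Real.exp ((m/2) * R) := by
      calc C + ε = ε * (C/ε + 1) := heq.symm
      _ ≤ ε * Real.exp ((m/2) * R) := mul_le_mul_of_nonneg_left hexp hε0.le
    rw [neg_mul, Real.exp_neg, inv_mul_le_iff₀ (Real.exp_pos _)]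
    nlinarith
  set μ : ℝ := min (m/2) (Real.log (1+ε) / R) with hμdef
  have hμ0 : 0 < μ := lt_min (by linarith) (div_pos (Real.log_pos (by linarith)) hR0)
  have hμm2 : μ ≤ m/2 := min_le_left _ _
  have hμm : μ ≤ m := by linarith
  refine ⟨μ, hμ0, ?_⟩
  -- pointwise exponential interpolation bound
  have hpt : ∀ d : ℝ, 0 ≤ d →
      Real.exp (μ*d) ≤ (1+ε) + Real.exp (-(m/2)*R) * Real.exp (m*d) := by
    intro d hd
    have hpos : (0:ℝ) < Real.exp (-(m/2)*R) * Real.exp (m*d) :=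
      mul_pos (Real.exp_pos _) (Real.exp_pos _)
    rcases le_or_gt d R with h | h
    · have h1 : μ * d ≤ Real.log (1+ε) := by
        have ha : μ * d ≤ μ * R := mul_le_mul_of_nonneg_left h hμ0.le
        have hb' : μ * R ≤ Real.log (1+ε) := by
          have := min_le_right (m/2) (Real.log (1+ε) / R)
          calc μ * R ≤ (Real.log (1+ε) / R) * R :=
                mul_le_mul_of_nonneg_right this hR0.le
          _ = Real.log (1+ε) := by field_simp
        linarith
      have h2 : Real.exp (μ*d) ≤ 1+ε := by
        calc Real.exp (μ*d) ≤ Real.exp (Real.log (1+ε)) := Real.exp_le_exp.mpr h1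
        _ = 1+ε := Real.exp_log (by linarith)
      linarith
    · have h1 : μ * d ≤ -(m/2)*R + m*d := by
        nlinarith [mul_nonneg (by linarith : (0:ℝ) ≤ m - μ) (by linarith : (0:ℝ) ≤ d - R),
          mul_le_mul_of_nonneg_right hμm2 hR0.le]
      have h2 : Real.exp (μ*d) ≤ Real.exp (-(m/2)*R) * Real.exp (m*d) := by
        rw [← Real.exp_add]
        exact Real.exp_le_exp.mpr h1
      linarith
  -- real column bound for the μ-tilted kernel
  have hsumμ : ∀ u, Summable (fun x => Real.exp (μ * dist x u) * p x u) := by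
    intro u
    refine Summable.of_nonneg_of_le
      (fun x => mul_nonneg (Real.exp_pos _).le (hp0 x u)) (fun x => ?_) (htemp_col u).1
    exact mul_le_mul_of_nonneg_right
      (Real.exp_le_exp.mpr (mul_le_mul_of_nonneg_right hμm dist_nonneg)) (hp0 x u)
  have hcolμ : ∀ u, ∑' x, Real.exp (μ * dist x u) * p x u ≤ 1 + 2*ε := by
    intro u
    have hs1 : Summable (fun x => (1+ε) * p x u) := (hcol u).1.mul_left _
    have hs2 : Summable (fun x => Real.exp (-(m/2)*R) * (Real.exp (m * dist x u) * p x u)) :=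
      (htemp_col u).1.mul_left _
    have hle : ∀ x, Real.exp (μ * dist x u) * p x u ≤
        (1+ε) * p x u + Real.exp (-(m/2)*R) * (Real.exp (m * dist x u) * p x u) := by
      intro x
      have h1 := hpt (dist x u) dist_nonneg
      have h2 := mul_le_mul_of_nonneg_right h1 (hp0 x u)
      nlinarith [h2]
    calc ∑' x, Real.exp (μ * dist x u) * p x u
        ≤ ∑' x, ((1+ε) * p x u + Real.exp (-(m/2)*R) * (Real.exp (m * dist x u) * p x u)) :=
          Summable.tsum_le_tsum hle (hsumμ u) (hs1.add hs2)
    _ = (1+ε) * (∑' x, p x u) +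
          Real.exp (-(m/2)*R) * ∑' x, Real.exp (m * dist x u) * p x u := by
          rw [Summable.tsum_add hs1 hs2, tsum_mul_left, tsum_mul_left]
    _ ≤ (1+ε) * 1 + ε := by
          refine add_le_add (mul_le_mul_of_nonneg_left (hcol u).2 (by linarith)) ?_
          calc Real.exp (-(m/2)*R) * ∑' x, Real.exp (m * dist x u) * p x u
              ≤ Real.exp (-(m/2)*R) * C :=
                mul_le_mul_of_nonneg_left (htemp_col u).2 (Real.exp_pos _).le
          _ ≤ ε := hRC
    _ = 1 + 2*ε := by ring
  -- pass to ℝ≥0∞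
  set G : T → ℝ≥0∞ := fun x => ENNReal.ofReal (g x) with hGdef
  set P : T → T → ℝ≥0∞ := fun x u => ENNReal.ofReal (p x u) with hPdef
  set W : T → T → ℝ≥0∞ := fun x u => ENNReal.ofReal (Real.exp (μ * dist x u)) with hWdef
  set Wd : T → ℝ≥0∞ := fun y => ENNReal.ofReal (Real.exp (μ * Metric.infDist y (Λ : Set T)))
    with hWddef
  have hrow' : ∀ x, ∑' u, P x u ≤ 1 := by
    intro x
    rw [hPdef]
    simp only
    rw [← ENNReal.ofReal_tsum_of_nonneg (hp0 x) (hrow x).1]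
    exact ENNReal.ofReal_le_one.mpr (hrow x).2
  have hsub' : ∀ x, x ∉ Λ → G x ≤ ENNReal.ofReal b * ∑' u, P x u * G u := by
    intro x hx
    have hsumpg : Summable (fun u => p x u * g u) := by
      refine Summable.of_nonneg_of_le (fun u => mul_nonneg (hp0 x u) (hg0 u))
        (fun u => ?_) ((hrow x).1.mul_right M)
      exact mul_le_mul_of_nonneg_left (hM u) (hp0 x u)
    calc G x ≤ ENNReal.ofReal (b * ∑' u, p x u * g u) :=
          ENNReal.ofReal_le_ofReal (hsub x hx)
    _ = ENNReal.ofReal b * ENNReal.ofReal (∑' u, p x u * g u) :=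
          ENNReal.ofReal_mul hb0.le
    _ = ENNReal.ofReal b * ∑' u, ENNReal.ofReal (p x u * g u) := by
          rw [ENNReal.ofReal_tsum_of_nonneg (fun u => mul_nonneg (hp0 x u) (hg0 u)) hsumpg]
    _ = ENNReal.ofReal b * ∑' u, P x u * G u := by
          refine congrArg _ (tsum_congr fun u => ?_)
          rw [hPdef, hGdef]
          exact ENNReal.ofReal_mul (hp0 x u)
  have hWuu' : ∀ u, W u u = 1 := by
    intro u
    rw [hWdef]
    simp
  have htri' : ∀ y v u, W y u ≤ W y v * W v u := by
    intro y v u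
    rw [hWdef]
    simp only
    rw [← ENNReal.ofReal_mul (Real.exp_pos _).le, ← Real.exp_add]
    refine ENNReal.ofReal_le_ofReal (Real.exp_le_exp.mpr ?_)
    have := dist_triangle y v u
    nlinarith [hμ0.le]
  have hcol' : ∀ u, ∑' x, W x u * P x u ≤ ENNReal.ofReal (1 + 2*ε) := by
    intro u
    have : ∀ x, W x u * P x u = ENNReal.ofReal (Real.exp (μ * dist x u) * p x u) := by
      intro x
      rw [hWdef, hPdef]
      exact (ENNReal.ofReal_mul (Real.exp_pos _).le).symm
    calc ∑' x, W x u * P x u = ∑' x, ENNReal.ofReal (Real.exp (μ * dist x u) * p x u) :=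
          tsum_congr this
    _ = ENNReal.ofReal (∑' x, Real.exp (μ * dist x u) * p x u) :=
          (ENNReal.ofReal_tsum_of_nonneg
            (fun x => mul_nonneg (Real.exp_pos _).le (hp0 x u)) (hsumμ u)).symm
    _ ≤ ENNReal.ofReal (1 + 2*ε) := ENNReal.ofReal_le_ofReal (hcolμ u)
  have hBs' : ENNReal.ofReal b * ENNReal.ofReal (1 + 2*ε) < 1 := by
    rw [← ENNReal.ofReal_mul hb0.le]
    refine ENNReal.ofReal_lt_one.mpr ?_
    have : b * (1 + 2*ε) = (1 + b)/2 := by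
      rw [hεdef]; field_simp; ring
    rw [this]; linarith
  have hWd' : ∀ y, ∀ u ∈ Λ, Wd y ≤ W y u := by
    intro y u hu
    rw [hWddef, hWdef]
    refine ENNReal.ofReal_le_ofReal (Real.exp_le_exp.mpr ?_)
    exact mul_le_mul_of_nonneg_left (Metric.infDist_le_dist_of_mem hu) hμ0.le
  have core := subharm_core Λ G (ENNReal.ofReal M) ENNReal.ofReal_ne_top
    (fun x => ENNReal.ofReal_le_ofReal (hM x))
    (ENNReal.ofReal b) (ENNReal.ofReal_lt_one.mpr hb1) P hrow' hsub'
    W hWuu' htri' (ENNReal.ofReal (1 + 2*ε)) hcol' hBs' Wd hWd'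
  -- convert back to a real summability statement
  have hne : (∑' y, ENNReal.ofReal (Real.exp (μ * Metric.infDist y (Λ : Set T)) * g y)) ≠ ⊤ := by
    refine ne_of_lt (lt_of_le_of_lt (le_of_eq (tsum_congr fun y => ?_)) core)
    rw [hWddef, hGdef]
    exact ENNReal.ofReal_mul (Real.exp_pos _).le
  have hsummNN : Summable (fun y =>
      Real.toNNReal (Real.exp (μ * Metric.infDist y (Λ : Set T)) * g y)) := by
    refine ENNReal.tsum_coe_ne_top_iff_summable.mp ?_
    exact hne
  have := NNReal.summable_coe.mpr hsummNN
  refine this.congr fun y => ?_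
  exact Real.coe_toNNReal _ (mul_nonneg (Real.exp_pos _).le (hg0 y))
end

section
/- Let ρ be a Borel probability measure on ℝ with bounded support satisfying R₁(τ) (i.e. ρ((a-ε,a+ε)) ≤ C ε^τ for all a, ε). For s ∈ (0, τ/2) define φ_s(z) = ∫ |V-z|^{-s} ρ(dV) and F_s(z) = sqrt(φ_{2s}(z)) / φ_s(z) for z ∈ ℂ. Then sup_{z ∈ ℂ} F_s(z) < ∞. -/
open MeasureTheory

section Aux

variable (ρ : Measure ℝ) [IsProbabilityMeasure ρ]

/-- Measurability of the kernel. -/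
lemma kernel_measurable (z : ℂ) (p : ℝ) :
    Measurable (fun V : ℝ => ‖(V : ℂ) - z‖ ^ (-p)) := by
  have h1 : Continuous (fun V : ℝ => ‖(V : ℂ) - z‖) :=
    continuous_norm.comp ((Complex.continuous_ofReal).sub continuous_const)
  exact h1.measurable.pow measurable_const

/-- Under the regularity hypothesis, singletons are null. -/
lemma singleton_null (τ C : ℝ) (hτ : 0 < τ)
    (hreg : ∀ (a ε : ℝ), 0 < ε → (ρ (Set.Ioo (a - ε) (a + ε))).toReal ≤ C * ε ^ τ)
    (a : ℝ) : ρ {a} = 0 := by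
  have hC : 0 ≤ C := by
    have := hreg 0 1 one_pos
    simpa using (ENNReal.toReal_nonneg.trans this)
  by_contra h
  have hfin : ρ {a} ≠ ⊤ := measure_ne_top ρ _
  have hδ : 0 < (ρ {a}).toReal := ENNReal.toReal_pos h hfin
  set δ := (ρ {a}).toReal with hδdef
  set ε := (δ / (C + 1)) ^ (1 / τ) with hε
  have hεpos : 0 < ε := Real.rpow_pos_of_pos (div_pos hδ (by linarith)) _
  have hετ : ε ^ τ = δ / (C + 1) := by
    rw [hε, ← Real.rpow_mul (le_of_lt (div_pos hδ (by linarith)))]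
    simp [one_div, inv_mul_cancel₀ (ne_of_gt hτ)]
  have hsub : ({a} : Set ℝ) ⊆ Set.Ioo (a - ε) (a + ε) := by
    intro x hx
    simp only [Set.mem_singleton_iff] at hx
    subst hx
    constructor <;> linarith
  have h1 : (ρ {a}).toReal ≤ (ρ (Set.Ioo (a - ε) (a + ε))).toReal :=
    ENNReal.toReal_mono (measure_ne_top ρ _) (measure_mono hsub)
  have h2 := hreg a ε hεpos
  have h3 : C * (δ / (C + 1)) < δ := by
    rw [mul_div_assoc']
    rw [div_lt_iff₀ (by linarith : (0:ℝ) < C + 1)]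
    nlinarith
  rw [hετ] at h2
  linarith

/-- Uniform bound on the lintegral of the kernel. -/
lemma lint_bound (τ C : ℝ) (hτ : 0 < τ)
    (hreg : ∀ (a ε : ℝ), 0 < ε → (ρ (Set.Ioo (a - ε) (a + ε))).toReal ≤ C * ε ^ τ)
    (p : ℝ) (hp : 0 < p) (hpτ : p < τ) :
    ∃ K : ℝ, 0 ≤ K ∧ ∀ z : ℂ,
      ∫⁻ V, ENNReal.ofReal (‖(V : ℂ) - z‖ ^ (-p)) ∂ρ ≤ ENNReal.ofReal K := by
  have hC : 0 ≤ C := by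
    have := hreg 0 1 one_pos
    simpa using (ENNReal.toReal_nonneg.trans this)
  have hr : -(τ / p) < -1 := by
    rw [neg_lt_neg_iff]
    rw [lt_div_iff₀ hp]
    linarith
  -- the tail integral
  have hIint : IntegrableOn (fun t : ℝ => C * t ^ (-(τ / p))) (Set.Ioi 1) :=
    (integrableOn_Ioi_rpow_of_lt hr one_pos).const_mul C
  set I : ℝ := ∫ t in Set.Ioi (1:ℝ), C * t ^ (-(τ / p)) with hI
  have hInn : 0 ≤ I := by
    apply setIntegral_nonneg measurableSet_Ioi
    intro t ht
    exact mul_nonneg hC (Real.rpow_nonneg (le_of_lt (lt_trans one_pos ht)) _)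
  refine ⟨1 + I, by linarith, fun z => ?_⟩
  set f : ℝ → ℝ := fun V => ‖(V : ℂ) - z‖ ^ (-p) with hf
  have hfnn : 0 ≤ᵐ[ρ] f :=
    Filter.Eventually.of_forall fun V => Real.rpow_nonneg (norm_nonneg _) _
  rw [lintegral_eq_lintegral_meas_lt ρ hfnn (kernel_measurable z p).aemeasurable]
  -- pointwise bound on the distribution function
  have hbound : ∀ t : ℝ, 0 < t →
      ρ {V : ℝ | t < f V} ≤ ENNReal.ofReal (C * (t ^ (-(1/p))) ^ τ) := by
    intro t ht
    set ε : ℝ := t ^ (-(1/p)) with hε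
    have hεpos : 0 < ε := Real.rpow_pos_of_pos ht _
    have hsub : {V : ℝ | t < f V} ⊆ Set.Ioo (z.re - ε) (z.re + ε) := by
      intro V hV
      simp only [Set.mem_setOf_eq, hf] at hV
      have hx0 : 0 < ‖(V : ℂ) - z‖ := by
        rcases eq_or_lt_of_le (norm_nonneg ((V : ℂ) - z)) with h0 | h0
        · exfalso
          rw [← h0, Real.zero_rpow (neg_ne_zero.mpr hp.ne')] at hV
          linarith
        · exact h0
      have hlt : ‖(V : ℂ) - z‖ < ε := by
        by_contra hge
        push_neg at hge
        have : ‖(V : ℂ) - z‖ ^ (-p) ≤ ε ^ (-p) :=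
          Real.rpow_le_rpow_of_nonpos hεpos hge (by linarith)
        have hεp : ε ^ (-p) = t := by
          rw [hε, ← Real.rpow_mul (le_of_lt ht)]
          rw [show -(1/p) * -p = 1 by field_simp]
          exact Real.rpow_one t
        rw [hεp] at this
        linarith
      have hre : |V - z.re| < ε := by
        have h1 : |((V : ℂ) - z).re| ≤ ‖(V : ℂ) - z‖ :=
          Complex.abs_re_le_norm _
        have h2 : ((V : ℂ) - z).re = V - z.re := by simp
        rw [h2] at h1
        exact lt_of_le_of_lt h1 hlt
      rcases abs_lt.mp hre with ⟨ha, hb⟩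
      exact ⟨by linarith, by linarith⟩
    calc ρ {V : ℝ | t < f V} ≤ ρ (Set.Ioo (z.re - ε) (z.re + ε)) := measure_mono hsub
      _ ≤ ENNReal.ofReal (C * ε ^ τ) := by
          have := hreg z.re ε hεpos
          rw [← ENNReal.ofReal_toReal (measure_ne_top ρ (Set.Ioo (z.re - ε) (z.re + ε)))]
          exact ENNReal.ofReal_le_ofReal this
  -- split the domain
  have hsplit : Set.Ioi (0:ℝ) = Set.Ioc 0 1 ∪ Set.Ioi 1 :=
    (Set.Ioc_union_Ioi_eq_Ioi (le_of_lt one_pos)).symm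
  rw [hsplit, lintegral_union measurableSet_Ioi Set.Ioc_disjoint_Ioi_same]
  have h1 : ∫⁻ t in Set.Ioc (0:ℝ) 1, ρ {V : ℝ | t < f V} ≤ 1 := by
    calc ∫⁻ t in Set.Ioc (0:ℝ) 1, ρ {V : ℝ | t < f V}
        ≤ ∫⁻ _ in Set.Ioc (0:ℝ) 1, 1 :=
          lintegral_mono fun t => prob_le_one
      _ = 1 := by simp
  have h2 : ∫⁻ t in Set.Ioi (1:ℝ), ρ {V : ℝ | t < f V} ≤ ENNReal.ofReal I := by
    have hmono : ∫⁻ t in Set.Ioi (1:ℝ), ρ {V : ℝ | t < f V}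
        ≤ ∫⁻ t in Set.Ioi (1:ℝ), ENNReal.ofReal (C * t ^ (-(τ / p))) := by
      apply setLIntegral_mono' measurableSet_Ioi
      intro t ht
      have ht0 : (0:ℝ) < t := lt_trans one_pos ht
      have := hbound t ht0
      have heq : (t ^ (-(1/p))) ^ τ = t ^ (-(τ / p)) := by
        rw [← Real.rpow_mul ht0.le]
        congr 1
        field_simp
      rw [heq] at this
      exact this
    refine hmono.trans (le_of_eq ?_)
    rw [← ofReal_integral_eq_lintegral_ofReal hIint ?_]
    exact (ae_restrict_iff' measurableSet_Ioi).mpr (Filter.Eventually.of_forall fun t ht =>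
      mul_nonneg hC (Real.rpow_nonneg (le_of_lt (lt_trans one_pos ht)) _))
  calc (∫⁻ t in Set.Ioc (0:ℝ) 1, ρ {V : ℝ | t < f V}) + ∫⁻ t in Set.Ioi (1:ℝ), ρ {V : ℝ | t < f V}
      ≤ 1 + ENNReal.ofReal I := add_le_add h1 h2
    _ = ENNReal.ofReal (1 + I) := by
        rw [ENNReal.ofReal_add (by norm_num) hInn, ENNReal.ofReal_one]

/-- Uniform bound for the Bochner integral, with integrability. -/
lemma int_bound (τ C : ℝ) (hτ : 0 < τ)
    (hreg : ∀ (a ε : ℝ), 0 < ε → (ρ (Set.Ioo (a - ε) (a + ε))).toReal ≤ C * ε ^ τ)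
    (p : ℝ) (hp : 0 < p) (hpτ : p < τ) :
    ∃ K : ℝ, 0 ≤ K ∧ ∀ z : ℂ,
      Integrable (fun V : ℝ => ‖(V : ℂ) - z‖ ^ (-p)) ρ ∧
      ∫ V, ‖(V : ℂ) - z‖ ^ (-p) ∂ρ ≤ K := by
  obtain ⟨K, hK0, hK⟩ := lint_bound ρ τ C hτ hreg p hp hpτ
  refine ⟨K, hK0, fun z => ?_⟩
  have hfnn : 0 ≤ᵐ[ρ] fun V : ℝ => ‖(V : ℂ) - z‖ ^ (-p) :=
    Filter.Eventually.of_forall fun V => Real.rpow_nonneg (norm_nonneg _) _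
  have hmeas := (kernel_measurable z p).aestronglyMeasurable (μ := ρ)
  have hint : Integrable (fun V : ℝ => ‖(V : ℂ) - z‖ ^ (-p)) ρ := by
    refine ⟨hmeas, ?_⟩
    rw [hasFiniteIntegral_iff_ofReal hfnn]
    exact lt_of_le_of_lt (hK z) ENNReal.ofReal_lt_top
  refine ⟨hint, ?_⟩
  rw [integral_eq_lintegral_of_nonneg_ae hfnn hmeas]
  exact ENNReal.toReal_le_of_le_ofReal hK0 (hK z)

end Aux

/-- Uniform boundedness of `F_s(z) = sqrt(φ_{2s}(z))/φ_s(z)` for a bounded-support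
probability measure satisfying `R₁(τ)`, where `φ_s(z) = ∫ |V-z|^{-s} ρ(dV)` and
`s ∈ (0, τ/2)`. -/
theorem Fs_uniformly_bounded
    (ρ : Measure ℝ) [IsProbabilityMeasure ρ]
    (hsupp : ∃ R : ℝ, ρ (Set.Icc (-R) R)ᶜ = 0)
    (τ C : ℝ) (hτ : 0 < τ)
    (hreg : ∀ (a ε : ℝ), 0 < ε → (ρ (Set.Ioo (a - ε) (a + ε))).toReal ≤ C * ε ^ τ)
    (s : ℝ) (hs0 : 0 < s) (hsτ : s < τ / 2) :
    ∃ M : ℝ, ∀ z : ℂ,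
      Real.sqrt (∫ V, ‖(V : ℂ) - z‖ ^ (-(2 * s)) ∂ρ) /
        (∫ V, ‖(V : ℂ) - z‖ ^ (-s) ∂ρ) ≤ M := by
  obtain ⟨R0, hR0⟩ := hsupp
  set R := max R0 0 with hRdef
  have hRnn : (0:ℝ) ≤ R := le_max_right _ _
  have hsupp' : ρ (Set.Icc (-R) R)ᶜ = 0 :=
    measure_mono_null (Set.compl_subset_compl.mpr
      (Set.Icc_subset_Icc (neg_le_neg (le_max_left _ _)) (le_max_left _ _))) hR0
  have hae : ∀ᵐ V ∂ρ, V ∈ Set.Icc (-R) R := by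
    rw [MeasureTheory.ae_iff]
    have he : {V : ℝ | ¬ V ∈ Set.Icc (-R) R} = (Set.Icc (-R) R)ᶜ := rfl
    rw [he]
    exact hsupp'
  have haez : ∀ z : ℂ, ∀ᵐ V : ℝ ∂ρ, (V : ℂ) ≠ z := by
    intro z
    rw [MeasureTheory.ae_iff]
    refine measure_mono_null ?_ (singleton_null ρ τ C hτ hreg z.re)
    intro V hV
    simp only [Set.mem_setOf_eq, not_not] at hV
    simp only [Set.mem_singleton_iff, ← hV, Complex.ofReal_re]
  obtain ⟨K2, hK20, hK2⟩ := int_bound ρ τ C hτ hreg (2 * s) (by linarith) (by linarith)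
  obtain ⟨K1, hK10, hK1⟩ := int_bound ρ τ C hτ hreg s hs0 (by linarith)
  -- lower bound for the denominator
  have hB : ∀ z : ℂ, (0:ℝ) < R + 1 + ‖z‖ := by
    intro z
    have := norm_nonneg z
    linarith
  have hlow : ∀ z : ℂ,
      (R + 1 + ‖z‖) ^ (-s) ≤ ∫ V, ‖(V : ℂ) - z‖ ^ (-s) ∂ρ := by
    intro z
    have hmono := integral_mono_ae (μ := ρ)
      (integrable_const ((R + 1 + ‖z‖) ^ (-s))) (hK1 z).1 ?_
    · simpa using hmono
    · filter_upwards [hae, haez z] with V hV hVz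
      have hx0 : 0 < ‖(V : ℂ) - z‖ :=
        norm_pos_iff.mpr (sub_ne_zero.mpr hVz)
      have hVR : |V| ≤ R := abs_le.mpr ⟨by linarith [hV.1], hV.2⟩
      have hxle : ‖(V : ℂ) - z‖ ≤ R + 1 + ‖z‖ := by
        have h1 : ‖(V : ℂ) - z‖ ≤ ‖(V : ℂ)‖ + ‖z‖ := norm_sub_le _ _
        simp only [Complex.norm_real, Real.norm_eq_abs] at h1
        calc ‖(V : ℂ) - z‖ ≤ |V| + ‖z‖ := h1
          _ ≤ R + 1 + ‖z‖ := by linarith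
      exact Real.rpow_le_rpow_of_nonpos hx0 hxle (by linarith)
  refine ⟨max (Real.sqrt K2 / (3 * R + 2) ^ (-s)) (3 ^ s), fun z => ?_⟩
  rcases le_or_gt (‖z‖) (2 * R + 1) with hz | hz
  · -- small |z|
    refine le_trans ?_ (le_max_left _ _)
    refine div_le_div₀ (Real.sqrt_nonneg _) (Real.sqrt_le_sqrt (hK2 z).2)
      (Real.rpow_pos_of_pos (by linarith) _) ?_
    refine le_trans ?_ (hlow z)
    exact Real.rpow_le_rpow_of_nonpos (hB z) (by linarith) (by linarith)
  · -- large |z|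
    have hzR : (0:ℝ) < ‖z‖ - R := by linarith
    have hup : (∫ V, ‖(V : ℂ) - z‖ ^ (-(2 * s)) ∂ρ)
        ≤ (‖z‖ - R) ^ (-(2 * s)) := by
      have hmono := integral_mono_ae (μ := ρ) (hK2 z).1
        (integrable_const ((‖z‖ - R) ^ (-(2 * s)))) ?_
      · simpa using hmono
      · filter_upwards [hae] with V hV
        have hVR : |V| ≤ R := abs_le.mpr ⟨by linarith [hV.1], hV.2⟩
        have h1 : ‖z‖ - R ≤ ‖(V : ℂ) - z‖ := by
          have h2 : ‖z‖ - ‖(V : ℂ)‖ ≤ ‖z - (V : ℂ)‖ := norm_sub_norm_le _ _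
          rw [norm_sub_rev] at h2
          simp only [Complex.norm_real, Real.norm_eq_abs] at h2
          linarith
        exact Real.rpow_le_rpow_of_nonpos hzR h1 (by linarith)
    have hsq : Real.sqrt ((‖z‖ - R) ^ (-(2 * s)))
        = (‖z‖ - R) ^ (-s) := by
      have h2 : (‖z‖ - R) ^ (-(2 * s)) = ((‖z‖ - R) ^ (-s)) ^ 2 := by
        rw [sq, ← Real.rpow_add hzR]
        ring_nf
      rw [h2, Real.sqrt_sq (Real.rpow_nonneg hzR.le _)]
    refine le_trans ?_ (le_max_right _ _)
    have hratio : Real.sqrt (∫ V, ‖(V : ℂ) - z‖ ^ (-(2 * s)) ∂ρ) /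
          (∫ V, ‖(V : ℂ) - z‖ ^ (-s) ∂ρ)
        ≤ (‖z‖ - R) ^ (-s) / (R + 1 + ‖z‖) ^ (-s) :=
      div_le_div₀ (Real.rpow_nonneg hzR.le _)
        ((Real.sqrt_le_sqrt hup).trans_eq hsq)
        (Real.rpow_pos_of_pos (hB z) _) (hlow z)
    refine hratio.trans ?_
    have hy3x : R + 1 + ‖z‖ ≤ 3 * (‖z‖ - R) := by linarith
    rw [Real.rpow_neg hzR.le, Real.rpow_neg (hB z).le, inv_div_inv]
    rw [div_le_iff₀ (Real.rpow_pos_of_pos hzR _)]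
    calc (R + 1 + ‖z‖) ^ s ≤ (3 * (‖z‖ - R)) ^ s :=
          Real.rpow_le_rpow (hB z).le hy3x hs0.le
      _ = 3 ^ s * (‖z‖ - R) ^ s :=
          Real.mul_rpow (by norm_num) hzR.le
end
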